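/- arXiv:1910.13830 — 6 statements merged into one kernel-verified Lean document; each statement's English description precedes it below -/
import Mathlib

section
/- If h is a uniformly random hash function from Fin K to Fin B, then for every class i : Fin K the expected meta-class probability of the bucket containing i equals E[P_{h(i)}(h)] = p i + (1 − p i)/B. -/
lemma uniform_hash_count_aux (K B : ℕ) (k i : Fin K) (hne : k ≠ i) :
    (Finset.univ.filter (fun h : Fin K → Fin B => h k = h i)).card = B ^ (K - 1) := by
  rw [Finset.card_filter]
  rw [← Equiv.sum_comp (Equiv.piSplitAt k (fun _ => Fin B)).symm]
  simp only [Equiv.piSplitAt_symm_apply, dif_pos rfl, dif_neg (Ne.symm hne)]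
  rw [Fintype.sum_prod_type, Finset.sum_comm]
  simp [Finset.sum_ite_eq, Fintype.card_fun]

/-- For a uniformly random hash function `h : Fin K → Fin B`, for every class
`i`, the expected meta-class probability of the bucket containing `i` is
`E[P_{h(i)}(h)] = p i + (1 - p i)/B`. -/
theorem uniform_hash_expected_metaclass_prob
    (K B : ℕ) (hK : 0 < K) (hB : 0 < B)
    (p : Fin K → ℝ) (hp : ∀ i, 0 ≤ p i) (hsum : ∑ i, p i = 1)
    (i : Fin K) :
    (∑ h : Fin K → Fin B,
        ∑ k ∈ Finset.univ.filter (fun k => h k = h i), p k) / (B : ℝ) ^ K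
      = p i + (1 - p i) / (B : ℝ) := by
  have hB0 : (B : ℝ) ≠ 0 := Nat.cast_ne_zero.mpr hB.ne'
  have key : (∑ h : Fin K → Fin B,
      ∑ k ∈ Finset.univ.filter (fun k => h k = h i), p k)
      = ∑ k : Fin K, ((Finset.univ.filter
          (fun h : Fin K → Fin B => h k = h i)).card : ℝ) * p k := by
    simp only [Finset.sum_filter]
    rw [Finset.sum_comm]
    congr 1; ext k
    rw [← Finset.sum_filter, Finset.sum_const, nsmul_eq_mul]
  rw [key]
  rw [← Finset.add_sum_erase _ _ (Finset.mem_univ i)]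
  have h1 : ((Finset.univ.filter
      (fun h : Fin K → Fin B => h i = h i)).card : ℝ) = (B : ℝ) ^ K := by
    simp [Fintype.card_fun]
  have h2 : ∀ k ∈ Finset.univ.erase i, ((Finset.univ.filter
      (fun h : Fin K → Fin B => h k = h i)).card : ℝ) * p k
      = (B : ℝ) ^ (K - 1) * p k := by
    intro k hk
    rw [uniform_hash_count_aux K B k i (Finset.ne_of_mem_erase hk)]
    push_cast; ring
  rw [Finset.sum_congr rfl h2, h1, ← Finset.mul_sum]
  have h3 : ∑ k ∈ Finset.univ.erase i, p k = 1 - p i := by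
    have := Finset.add_sum_erase Finset.univ p (Finset.mem_univ i)
    rw [hsum] at this; linarith
  rw [h3]
  have hpow : (B : ℝ) ^ K = (B : ℝ) ^ (K - 1) * B := by
    rw [← pow_succ, Nat.sub_add_cancel hK]
  rw [hpow]
  have hpB : (B : ℝ) ^ (K - 1) ≠ 0 := pow_ne_zero _ hB0
  field_simp
end

section
/- Let B ≥ 2 and let h be a uniformly random hash function from Fin K to Fin B. For every class i : Fin K, the single-hash MACH estimator is unbiased: (B/(B−1)) · (E[P_{h(i)}(h)] − 1/B) = p i. -/
lemma mach_count_aux (K B : ℕ) (i k : Fin K) (h : k ≠ i) :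
    (B:ℝ) * ∑ f : Fin K → Fin B, (if f k = f i then (1:ℝ) else 0) = (B:ℝ)^K := by
  rw [← Equiv.sum_comp (Equiv.funSplitAt k (Fin B)).symm]
  simp only [Equiv.funSplitAt_symm_apply, Fintype.sum_prod_type, dif_pos, dif_neg (Ne.symm h)]
  rw [Finset.sum_comm]
  simp [Finset.sum_ite_eq, Fintype.card_fun, Fintype.card_subtype_compl]
  rw [← pow_succ']
  congr 1
  omega

/-- For `B ≥ 2` and a uniformly random hash function `h : Fin K → Fin B`, the
single-hash MACH estimator is unbiased:
`(B/(B−1)) · (E[P_{h(i)}(h)] − 1/B) = p i`. -/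
theorem mach_single_hash_unbiased
    (K B : ℕ) (hK : 0 < K) (hB : 2 ≤ B)
    (p : Fin K → ℝ) (hp : ∀ i, 0 ≤ p i) (hsum : ∑ i, p i = 1)
    (i : Fin K) :
    ((B : ℝ) / ((B : ℝ) - 1)) *
      ((∑ h : Fin K → Fin B,
          ∑ k ∈ Finset.univ.filter (fun k => h k = h i), p k) / (B : ℝ) ^ K
        - 1 / (B : ℝ))
      = p i := by
  have hB0 : (0:ℝ) < (B:ℝ) := by
    have : (2:ℝ) ≤ (B:ℝ) := by exact_mod_cast hB
    linarith
  have hB1 : (B:ℝ) - 1 ≠ 0 := by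
    have : (2:ℝ) ≤ (B:ℝ) := by exact_mod_cast hB
    linarith
  have hS : (∑ h : Fin K → Fin B,
      ∑ k ∈ Finset.univ.filter (fun k => h k = h i), p k)
      = p i * (B:ℝ)^K + (1 - p i) * ((B:ℝ)^K / B) := by
    have step1 : ∀ h : Fin K → Fin B,
        (∑ k ∈ Finset.univ.filter (fun k => h k = h i), p k)
        = ∑ k, if h k = h i then p k else 0 := fun h => by
      rw [Finset.sum_filter]
    simp only [step1]
    rw [Finset.sum_comm]
    have step2 : ∀ k : Fin K,
        (∑ h : Fin K → Fin B, if h k = h i then p k else 0)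
        = p k * ∑ h : Fin K → Fin B, if h k = h i then (1:ℝ) else 0 := fun k => by
      rw [Finset.mul_sum]
      simp [mul_ite]
    simp only [step2]
    rw [← Finset.add_sum_erase _ _ (Finset.mem_univ i)]
    have ci : (∑ h : Fin K → Fin B, if h i = h i then (1:ℝ) else 0) = (B:ℝ)^K := by
      simp [Finset.card_univ, Fintype.card_fun]
    rw [ci]
    have ck : ∀ k ∈ Finset.univ.erase i,
        p k * (∑ h : Fin K → Fin B, if h k = h i then (1:ℝ) else 0)
        = p k * ((B:ℝ)^K / B) := by
      intro k hk
      have hki : k ≠ i := Finset.ne_of_mem_erase hk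
      have hc : (∑ h : Fin K → Fin B, if h k = h i then (1:ℝ) else 0) = (B:ℝ)^K / B := by
        rw [eq_div_iff hB0.ne', mul_comm]
        exact mach_count_aux K B i k hki
      rw [hc]
    rw [Finset.sum_congr rfl ck, ← Finset.sum_mul]
    have herase : (∑ k ∈ Finset.univ.erase i, p k) = 1 - p i := by
      have := Finset.add_sum_erase _ p (Finset.mem_univ i)
      rw [hsum] at this
      linarith
    rw [herase]
  rw [hS]
  field_simp
  ring
end

section
/- (Theorem 1) Let B ≥ 2 and R ≥ 1, and let H = (h_1, …, h_R) be a uniformly random element of the set of functions Fin R → (Fin K → Fin B) (equivalently, R independent uniformly random hash functions). Then for every class i : Fin K, the MACH estimator is unbiased: E[(B/(B−1)) · ((1/R) Σ_{j=1}^R P_{h_j(i)}(h_j) − 1/B)] = p i. -/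
open Finset

lemma card_ne_aux {α : Type*} [Fintype α] [DecidableEq α] (j : α) :
    Fintype.card {x : α // x ≠ j} = Fintype.card α - 1 := by
  simp [Fintype.card_subtype_compl]

lemma sum_pi_apply {α X : Type*} [Fintype α] [DecidableEq α] [Fintype X] (j : α) (f : X → ℝ) :
    ∑ H : α → X, f (H j) = (Fintype.card X : ℝ) ^ (Fintype.card α - 1) * ∑ x, f x := by
  classical
  rw [← Equiv.sum_comp (Equiv.piSplitAt j (fun _ => X)).symm (fun H => f (H j))]
  simp [Fintype.sum_prod_type, Equiv.piSplitAt_symm_apply, mul_comm, card_ne_aux,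
    Fintype.card_fun, ← Finset.sum_mul]

lemma sum_pi_ite {α X : Type*} [Fintype α] [DecidableEq α] [Fintype X] [DecidableEq X]
    {k i : α} (h : k ≠ i) (c : ℝ) :
    ∑ H : α → X, (if H k = H i then c else 0)
      = (Fintype.card X : ℝ) ^ (Fintype.card α - 1) * c := by
  classical
  rw [← Equiv.sum_comp (Equiv.piSplitAt k (fun _ => X)).symm
    (fun H => if H k = H i then c else 0)]
  simp only [Fintype.sum_prod_type, Equiv.piSplitAt_symm_apply, dif_pos rfl,
    dif_neg (Ne.symm h)]
  rw [Finset.sum_comm]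
  simp [Finset.sum_ite_eq', card_ne_aux, Fintype.card_fun, mul_comm]

/-- (Theorem 1) Let `B ≥ 2`, `R ≥ 1`, and let `H = (h_1, …, h_R)` be a
uniformly random tuple of `R` hash functions `Fin K → Fin B` (each of the
`B^(K·R)` tuples having equal probability). Then for every class `i`, the MACH
estimator is unbiased:
`E[(B/(B−1)) · ((1/R) Σ_j P_{h_j(i)}(h_j) − 1/B)] = p i`. -/
theorem mach_estimator_unbiased
    (K B R : ℕ) (hK : 0 < K) (hB : 2 ≤ B) (hR : 1 ≤ R)
    (p : Fin K → ℝ) (hp : ∀ i, 0 ≤ p i) (hsum : ∑ i, p i = 1)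
    (i : Fin K) :
    (∑ H : Fin R → (Fin K → Fin B),
        ((B : ℝ) / ((B : ℝ) - 1)) *
          ((1 / (R : ℝ)) *
              (∑ j : Fin R,
                ∑ k ∈ Finset.univ.filter (fun k => H j k = H j i), p k)
            - 1 / (B : ℝ)))
        / (B : ℝ) ^ (K * R)
      = p i := by
  classical
  have hB2 : (2 : ℝ) ≤ (B : ℝ) := by exact_mod_cast hB
  have hB0 : (B : ℝ) ≠ 0 := by linarith
  have hB1 : (B : ℝ) - 1 ≠ 0 := by linarith
  -- inner sum over a single hash function
  have hinner : ∑ h : Fin K → Fin B,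
      ∑ k ∈ Finset.univ.filter (fun k => h k = h i), p k
      = (B : ℝ) ^ K * p i + (B : ℝ) ^ (K - 1) * (1 - p i) := by
    simp_rw [Finset.sum_filter]
    rw [Finset.sum_comm]
    rw [← Finset.add_sum_erase _ _ (Finset.mem_univ i)]
    have h1 : ∑ h : Fin K → Fin B, (if h i = h i then p i else 0)
        = (B : ℝ) ^ K * p i := by
      simp [Finset.card_univ, Fintype.card_fun, mul_comm]
    have h2 : ∀ k ∈ Finset.univ.erase i,
        ∑ h : Fin K → Fin B, (if h k = h i then p k else 0)
          = (B : ℝ) ^ (K - 1) * p k := by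
      intro k hk
      rw [sum_pi_ite (Finset.ne_of_mem_erase hk) (p k)]
      simp
    rw [h1, Finset.sum_congr rfl h2, ← Finset.mul_sum,
      Finset.sum_erase_eq_sub (Finset.mem_univ i), hsum]
  -- sum over all tuples
  have hT : ∑ H : Fin R → (Fin K → Fin B),
      ∑ j : Fin R, ∑ k ∈ Finset.univ.filter (fun k => H j k = H j i), p k
      = (R : ℝ) * ((B : ℝ) ^ K) ^ (R - 1) *
          ((B : ℝ) ^ K * p i + (B : ℝ) ^ (K - 1) * (1 - p i)) := by
    rw [Finset.sum_comm]
    have : ∀ j : Fin R, ∑ H : Fin R → (Fin K → Fin B),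
        ∑ k ∈ Finset.univ.filter (fun k => H j k = H j i), p k
        = ((B : ℝ) ^ K) ^ (R - 1) *
            ((B : ℝ) ^ K * p i + (B : ℝ) ^ (K - 1) * (1 - p i)) := by
      intro j
      have h3 := sum_pi_apply (α := Fin R) (X := Fin K → Fin B) j
          (fun h => ∑ k ∈ Finset.univ.filter (fun k => h k = h i), p k)
      rw [h3, hinner]
      simp [Fintype.card_fun]
    simp [this, Finset.sum_const, Finset.card_univ, mul_assoc]
  -- put everything together
  rw [← Finset.mul_sum, Finset.sum_sub_distrib, ← Finset.mul_sum, hT,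
    Finset.sum_const, Finset.card_univ]
  have hcard : Fintype.card (Fin R → Fin K → Fin B) = B ^ (K * R) := by
    simp [Fintype.card_fun, ← pow_mul, mul_comm]
  rw [hcard]
  obtain ⟨K', rfl⟩ : ∃ K', K = K' + 1 := ⟨K - 1, by omega⟩
  obtain ⟨R', rfl⟩ : ∃ R', R = R' + 1 := ⟨R - 1, by omega⟩
  simp only [Nat.add_sub_cancel, nsmul_eq_mul]
  have hR0 : ((R' : ℝ) + 1) ≠ 0 := by positivity
  have hBKR : (B : ℝ) ^ ((K' + 1) * (R' + 1)) ≠ 0 := pow_ne_zero _ hB0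
  push_cast
  field_simp
  ring_nf
end

section
/- Let B ≥ 2 and let h be a uniformly random hash function from Fin K to Fin B. For all classes i, k : Fin K, one has p i < p k if and only if E[P_{h(i)}(h)] < E[P_{h(k)}(h)]. In particular, a class i maximizes p over Fin K if and only if it maximizes the expected meta-class score j ↦ E[P_{h(j)}(h)], which justifies the MACH prediction rule argmax_i Σ_j P^j_{h_j(i)}. -/
lemma mach_count (K B : ℕ) (i m : Fin K) (hmi : m ≠ i) :
    (Finset.univ.filter (fun h : Fin K → Fin B => h m = h i)).card = B ^ (K - 1) := by
  have e : {h : Fin K → Fin B // h m = h i} ≃ ({j : Fin K // j ≠ m} → Fin B) :=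
    { toFun := fun h j => h.1 j.1
      invFun := fun g =>
        ⟨fun j => if hj : j = m then g ⟨i, hmi.symm⟩ else g ⟨j, hj⟩, by
          simp [hmi.symm]⟩
      left_inv := fun h => by
        ext j
        by_cases hj : j = m
        · subst hj; simp [h.2]
        · simp [hj]
      right_inv := fun g => by
        ext j
        simp [j.2] }
  have h1 : (Finset.univ.filter (fun h : Fin K → Fin B => h m = h i)).card
      = Fintype.card {h : Fin K → Fin B // h m = h i} := by
    simp [Fintype.card_subtype]
  rw [h1, Fintype.card_congr e]
  have : Fintype.card {j : Fin K // j ≠ m} = K - 1 := by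
    simp [Fintype.card_subtype_compl (p := fun j => j = m), Fintype.card_subtype_eq]
  simp [Fintype.card_fun, this]

lemma mach_total (K B : ℕ) (hK : 0 < K) (hB : 2 ≤ B)
    (p : Fin K → ℝ) (hsum : ∑ i, p i = 1) (i : Fin K) :
    (∑ h : Fin K → Fin B, ∑ m ∈ Finset.univ.filter (fun m => h m = h i), p m)
      = (B : ℝ) ^ (K - 1) + ((B : ℝ) ^ K - (B : ℝ) ^ (K - 1)) * p i := by
  have swap : (∑ h : Fin K → Fin B, ∑ m ∈ Finset.univ.filter (fun m => h m = h i), p m)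
      = ∑ m : Fin K, ((Finset.univ.filter (fun h : Fin K → Fin B => h m = h i)).card : ℝ) * p m := by
    simp only [Finset.sum_filter]
    rw [Finset.sum_comm]
    congr 1
    ext m
    simp [Finset.sum_ite, Finset.sum_const, mul_comm]
  rw [swap]
  have card_i : ((Finset.univ.filter (fun h : Fin K → Fin B => h i = h i)).card : ℝ)
      = (B : ℝ) ^ K := by
    simp [Finset.filter_true_of_mem, Fintype.card_fun]
  have key : ∀ m : Fin K,
      ((Finset.univ.filter (fun h : Fin K → Fin B => h m = h i)).card : ℝ) * p m
      = (B : ℝ) ^ (K - 1) * p m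
        + (if m = i then ((B : ℝ) ^ K - (B : ℝ) ^ (K - 1)) * p i else 0) := by
    intro m
    by_cases hm : m = i
    · subst hm; rw [card_i, if_pos rfl]; ring
    · rw [mach_count K B i m hm]; simp [hm]
  rw [Finset.sum_congr rfl (fun m _ => key m), Finset.sum_add_distrib,
    ← Finset.mul_sum, hsum, Finset.sum_ite_eq' Finset.univ i]
  simp

/-- For `B ≥ 2` and a uniformly random hash function `h : Fin K → Fin B`,
`p i < p k` iff `E[P_{h(i)}(h)] < E[P_{h(k)}(h)]`; in particular a class
maximizes `p` iff it maximizes the expected meta-class score, justifying the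
MACH argmax prediction rule. -/
theorem mach_argmax_consistency
    (K B : ℕ) (hK : 0 < K) (hB : 2 ≤ B)
    (p : Fin K → ℝ) (hp : ∀ i, 0 ≤ p i) (hsum : ∑ i, p i = 1) :
    (∀ i k : Fin K,
      p i < p k ↔
        (∑ h : Fin K → Fin B,
            ∑ m ∈ Finset.univ.filter (fun m => h m = h i), p m) / (B : ℝ) ^ K
          < (∑ h : Fin K → Fin B,
              ∑ m ∈ Finset.univ.filter (fun m => h m = h k), p m) / (B : ℝ) ^ K) ∧
    (∀ i : Fin K,
      (∀ j : Fin K, p j ≤ p i) ↔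
        (∀ j : Fin K,
          (∑ h : Fin K → Fin B,
              ∑ m ∈ Finset.univ.filter (fun m => h m = h j), p m) / (B : ℝ) ^ K
            ≤ (∑ h : Fin K → Fin B,
                ∑ m ∈ Finset.univ.filter (fun m => h m = h i), p m) / (B : ℝ) ^ K)) := by
  have hBpos : (0:ℝ) < (B:ℝ) := by positivity
  have hpowpos : (0:ℝ) < (B:ℝ) ^ K := by positivity
  have hcoef : (0:ℝ) < (B : ℝ) ^ K - (B : ℝ) ^ (K - 1) := by
    have h1 : (B : ℝ) ^ (K - 1) * 1 < (B : ℝ) ^ (K - 1) * (B : ℝ) := by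
      have : (2:ℝ) ≤ (B:ℝ) := by exact_mod_cast hB
      have hp1 : (0:ℝ) < (B:ℝ) ^ (K-1) := by positivity
      nlinarith
    have h2 : (B : ℝ) ^ (K - 1) * (B : ℝ) = (B : ℝ) ^ K := by
      rw [← pow_succ]
      congr 1
      omega
    linarith [h1, h2.symm ▸ h1]
  have key : ∀ i k : Fin K, p i < p k ↔
      (∑ h : Fin K → Fin B,
          ∑ m ∈ Finset.univ.filter (fun m => h m = h i), p m) / (B : ℝ) ^ K
        < (∑ h : Fin K → Fin B,
            ∑ m ∈ Finset.univ.filter (fun m => h m = h k), p m) / (B : ℝ) ^ K := by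
    intro i k
    rw [mach_total K B hK hB p hsum i, mach_total K B hK hB p hsum k,
      div_lt_div_iff_of_pos_right hpowpos]
    constructor
    · intro h; nlinarith
    · intro h; nlinarith
  refine ⟨key, fun i => ?_⟩
  constructor
  · intro h j
    by_contra hc
    push_neg at hc
    exact absurd ((key i j).mpr hc) (not_lt.mpr (h j))
  · intro h j
    by_contra hc
    push_neg at hc
    exact absurd ((key i j).mp hc) (not_lt.mpr (h j))
end

section
/- Let B ≥ 2 and R ≥ 1, and let H = (h_1, …, h_R) be R independent uniformly random hash functions from Fin K to Fin B. For every class i : Fin K, the expected value of the min-estimator is at most the expected single-hash meta-probability: E[min_{1 ≤ j ≤ R} P_{h_j(i)}(h_j)] ≤ p i + (1 − p i)/B. -/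
section aux

open Finset

/-- Functions `Fin K → Fin B` with `h k = h i` (for `k ≠ i`) are equivalent to
functions on the complement of `k`. -/
def machHashEquiv {K B : ℕ} (i k : Fin K) (hki : k ≠ i) :
    {h : Fin K → Fin B // h k = h i} ≃ ({j : Fin K // j ≠ k} → Fin B) where
  toFun h j := h.1 j
  invFun g := ⟨fun j => if hj : j = k then g ⟨i, fun hik => hki hik.symm⟩ else g ⟨j, hj⟩, by
    simp [hki.symm]⟩
  left_inv h := by
    ext j
    by_cases hj : j = k
    · subst hj; simp [h.2]
    · simp [hj]
  right_inv g := by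
    ext j
    simp [j.2]

theorem machCount {K B : ℕ} (i k : Fin K) (hki : k ≠ i) :
    ((Finset.univ.filter (fun h : Fin K → Fin B => h k = h i)).card : ℕ)
      = B ^ (K - 1) := by
  classical
  rw [← Fintype.card_subtype, Fintype.card_congr (machHashEquiv i k hki),
    Fintype.card_fun, Fintype.card_fin]
  congr 1
  rw [Fintype.card_subtype_compl, Fintype.card_subtype_eq, Fintype.card_fin]

end aux

/-- For `B ≥ 2`, `R ≥ 1` and `R` independent uniformly random hash functions
`h_1, …, h_R : Fin K → Fin B`, the expected value of the min-estimator is at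
most the expected single-hash meta-probability:
`E[min_j P_{h_j(i)}(h_j)] ≤ p i + (1 − p i)/B`. -/
theorem mach_min_estimator_expectation_le
    (K B R : ℕ) (hK : 0 < K) (hB : 2 ≤ B) (hR : 1 ≤ R)
    (p : Fin K → ℝ) (hp : ∀ i, 0 ≤ p i) (hsum : ∑ i, p i = 1)
    (i : Fin K) :
    (∑ H : Fin R → (Fin K → Fin B),
        (Finset.univ : Finset (Fin R)).inf'
          ⟨⟨0, hR⟩, Finset.mem_univ _⟩
          (fun j => ∑ k ∈ Finset.univ.filter (fun k => H j k = H j i), p k))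
        / (B : ℝ) ^ (K * R)
      ≤ p i + (1 - p i) / (B : ℝ) := by
  classical
  set j0 : Fin R := ⟨0, hR⟩ with hj0
  set F : (Fin K → Fin B) → ℝ :=
    fun h => ∑ k ∈ Finset.univ.filter (fun k => h k = h i), p k with hF
  have hBpos : (0:ℝ) < B := by
    have : (2:ℝ) ≤ B := by exact_mod_cast hB
    linarith
  -- Step 1: bound the min by the value at j0
  have h1 : (∑ H : Fin R → (Fin K → Fin B),
        (Finset.univ : Finset (Fin R)).inf'
          ⟨⟨0, hR⟩, Finset.mem_univ _⟩
          (fun j => ∑ k ∈ Finset.univ.filter (fun k => H j k = H j i), p k))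
      ≤ ∑ H : Fin R → (Fin K → Fin B), F (H j0) := by
    apply Finset.sum_le_sum
    intro H _
    exact Finset.inf'_le _ (Finset.mem_univ j0)
  -- Step 2: marginalize over the other coordinates
  have h2 : ∑ H : Fin R → (Fin K → Fin B), F (H j0)
      = ((B:ℝ) ^ K) ^ (R - 1) * ∑ h : Fin K → Fin B, F h := by
    rw [← (Equiv.funSplitAt j0 (Fin K → Fin B)).symm.sum_comp
      (fun H => F (H j0))]
    have : ∀ y : (Fin K → Fin B) × ({j : Fin R // j ≠ j0} → (Fin K → Fin B)),
        F ((Equiv.funSplitAt j0 (Fin K → Fin B)).symm y j0) = F y.1 := by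
      intro y; simp
    rw [Fintype.sum_congr _ _ this, Fintype.sum_prod_type]
    simp only [Finset.sum_const, Finset.card_univ, nsmul_eq_mul]
    rw [← Finset.mul_sum]
    congr 1
    rw [Fintype.card_fun, Fintype.card_fun, Fintype.card_fin,
      Fintype.card_subtype_compl, Fintype.card_subtype_eq, Fintype.card_fin,
      Fintype.card_fin]
    push_cast
    ring
  -- Step 3: compute the single-hash sum
  have h3 : ∑ h : Fin K → Fin B, F h
      = p i * (B:ℝ) ^ K + (1 - p i) * (B:ℝ) ^ (K - 1) := by
    have hswap : ∑ h : Fin K → Fin B, F h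
        = ∑ k : Fin K, ∑ h : Fin K → Fin B, if h k = h i then p k else 0 := by
      rw [Finset.sum_comm]
      apply Finset.sum_congr rfl
      intro h _
      simp only [hF, Finset.sum_filter]
    rw [hswap]
    have hterm : ∀ k : Fin K,
        (∑ h : Fin K → Fin B, if h k = h i then p k else 0)
          = ((Finset.univ.filter (fun h : Fin K → Fin B => h k = h i)).card : ℝ) * p k := by
      intro k
      rw [← Finset.sum_filter, Finset.sum_const, nsmul_eq_mul]
    have hsplit : ∑ k : Fin K, ∑ h : Fin K → Fin B, (if h k = h i then p k else 0)
        = ((B:ℝ) ^ K) * p i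
          + ∑ k ∈ Finset.univ.erase i, ((B:ℝ) ^ (K-1)) * p k := by
      rw [← Finset.add_sum_erase _ _ (Finset.mem_univ i)]
      congr 1
      · rw [hterm i]
        congr 1
        have : Finset.univ.filter (fun h : Fin K → Fin B => h i = h i)
            = (Finset.univ : Finset (Fin K → Fin B)) := by
          simp
        rw [this, Finset.card_univ, Fintype.card_fun, Fintype.card_fin, Fintype.card_fin]
        push_cast; ring
      · apply Finset.sum_congr rfl
        intro k hk
        rw [hterm k, machCount i k (Finset.ne_of_mem_erase hk)]
        push_cast; ring
    rw [hsplit, ← Finset.mul_sum]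
    have herase : ∑ k ∈ Finset.univ.erase i, p k = 1 - p i := by
      have := Finset.add_sum_erase Finset.univ p (Finset.mem_univ i)
      rw [hsum] at this
      linarith
    rw [herase]; ring
  -- Final arithmetic
  have hBne : (B:ℝ) ≠ 0 := ne_of_gt hBpos
  have hpow : (B:ℝ) ^ (K * R) = ((B:ℝ) ^ K) ^ (R - 1) * ((B:ℝ) ^ (K - 1) * B) := by
    rw [← pow_succ, Nat.sub_add_cancel hK, ← pow_mul, ← pow_add]
    congr 1
    have : K * (R - 1) + K = K * R := by
      cases R with
      | zero => omega
      | succ n => simp [Nat.mul_succ, Nat.succ_sub_one]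
    exact this.symm
  have heq : ((B:ℝ) ^ K) ^ (R - 1) * (p i * (B:ℝ) ^ K + (1 - p i) * (B:ℝ) ^ (K - 1))
      / (B:ℝ) ^ (K * R) = p i + (1 - p i) / (B:ℝ) := by
    rw [hpow]
    have hK' : (B:ℝ) ^ K = (B:ℝ) ^ (K - 1) * B := by
      rw [← pow_succ, Nat.sub_add_cancel hK]
    rw [hK']
    have hne1 : ((B:ℝ) ^ (K-1) * B) ^ (R - 1) ≠ 0 := by positivity
    have hne2 : (B:ℝ) ^ (K-1) ≠ 0 := by positivity
    field_simp
  calc (∑ H : Fin R → (Fin K → Fin B),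
        (Finset.univ : Finset (Fin R)).inf'
          ⟨⟨0, hR⟩, Finset.mem_univ _⟩
          (fun j => ∑ k ∈ Finset.univ.filter (fun k => H j k = H j i), p k))
        / (B : ℝ) ^ (K * R)
      ≤ (∑ H : Fin R → (Fin K → Fin B), F (H j0)) / (B : ℝ) ^ (K * R) := by
        have hpos : (0:ℝ) < (B:ℝ) ^ (K * R) := by positivity
        gcongr
    _ = p i + (1 - p i) / (B:ℝ) := by
        rw [h2, h3, heq]
end

section
/- (Theorem 2) Let B ≥ 2, K ≥ 1, let δ be a real number with 0 < δ ≤ 1, and let R be a positive integer with R ≥ 2 · log(K/√δ) / log B (natural logarithms). If H = (h_1, …, h_R) consists of R independent uniformly random hash functions from Fin K to Fin B, then with probability greater than or equal to 1 − δ, every pair of distinct classes c₁ ≠ c₂ in Fin K is distinguishable under H, i.e., there exists some j ∈ {1, …, R} with h_j(c₁) ≠ h_j(c₂). -/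
/-!
For fixed `c₁ ≠ c₂`, a uniformly random `h : Fin K → Fin B` has `h c₁ = h c₂` with probability
`1 / B`, so all `R` independent hash functions merge `c₁` and `c₂` with probability `B ^ (-R)`.
A union bound over fewer than `K ^ 2` pairs bounds the failure probability by `K ^ 2 / B ^ R`,
and the hypothesis on `R` says exactly that `K ^ 2 / B ^ R ≤ δ`.
-/

open Finset Fintype

section Collisions

variable {ι α β : Type*} [Fintype ι] [Fintype α] [Fintype β] [DecidableEq ι] [DecidableEq α]
  [DecidableEq β]

def subtypeApplyEqApplyProdEquiv {a a' : α} (h : a ≠ a') :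
    {f : α → β // f a = f a'} × β ≃ (α → β) where
  toFun p := Function.update p.1.1 a' p.2
  invFun g := (⟨Function.update g a' (g a), by simp [h]⟩, g a')
  left_inv := fun ⟨⟨f, hf⟩, y⟩ => by simp [h, ← hf]
  right_inv g := by simp

theorem card_filter_apply_eq_apply_mul_card {a a' : α} (h : a ≠ a') :
    #{f : α → β | f a = f a'} * card β = card β ^ card α := by
  rw [← Fintype.card_subtype, ← Fintype.card_prod,
    Fintype.card_congr (subtypeApplyEqApplyProdEquiv h), Fintype.card_fun]

theorem card_filter_forall_apply_eq_apply_mul_pow {a a' : α} (h : a ≠ a') :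
    #{H : ι → α → β | ∀ j, H j a = H j a'} * card β ^ card ι = card β ^ (card α * card ι) := by
  rw [← Fintype.card_subtype, Fintype.card_congr
    (Equiv.subtypePiEquivPi (p := fun _ (f : α → β) => f a = f a')), Fintype.card_fun,
    Fintype.card_subtype, ← mul_pow, card_filter_apply_eq_apply_mul_card h, pow_mul]

theorem card_filter_exists_collision_mul_pow_le :
    #{H : ι → α → β | ∃ a a', a ≠ a' ∧ ∀ j, H j a = H j a'} * card β ^ card ι
      ≤ card α ^ 2 * card β ^ (card α * card ι) := by
  have hsub : ({H : ι → α → β | ∃ a a', a ≠ a' ∧ ∀ j, H j a = H j a'} : Finset _)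
      ⊆ (univ : Finset α).offDiag.biUnion fun p => {H | ∀ j, H j p.1 = H j p.2} := by
    intro H
    simp only [mem_filter, mem_univ, true_and, mem_biUnion, mem_offDiag]
    rintro ⟨a, a', hne, hH⟩
    exact ⟨(a, a'), hne, hH⟩
  calc #{H : ι → α → β | ∃ a a', a ≠ a' ∧ ∀ j, H j a = H j a'} * card β ^ card ι
      ≤ (∑ p ∈ (univ : Finset α).offDiag, #{H : ι → α → β | ∀ j, H j p.1 = H j p.2})
          * card β ^ card ι := by
        gcongr
        exact (card_le_card hsub).trans card_biUnion_le
    _ = #(univ : Finset α).offDiag * card β ^ (card α * card ι) := by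
        rw [sum_mul, sum_const_nat]
        rintro p hp
        exact card_filter_forall_apply_eq_apply_mul_pow (mem_offDiag.1 hp).2.2
    _ ≤ card α ^ 2 * card β ^ (card α * card ι) := by
        gcongr
        rw [offDiag_card, card_univ, sq]
        exact Nat.sub_le _ _

theorem one_sub_sq_div_pow_le_card_filter_distinguishing_div [Nonempty β] :
    1 - (card α ^ 2 : ℝ) / card β ^ card ι
      ≤ #{H : ι → α → β | ∀ a a', a ≠ a' → ∃ j, H j a ≠ H j a'} / card β ^ (card α * card ι) := by
  have hsplit := card_filter_add_card_filter_not (s := univ)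
    fun H : ι → α → β => ∀ a a', a ≠ a' → ∃ j, H j a ≠ H j a'
  simp only [not_forall, not_exists, not_not, exists_prop, card_univ, card_fun, ← pow_mul]
    at hsplit
  have hbad := card_filter_exists_collision_mul_pow_le (ι := ι) (α := α) (β := β)
  set good := #{H : ι → α → β | ∀ a a', a ≠ a' → ∃ j, H j a ≠ H j a'}
  set bad := #{H : ι → α → β | ∃ a a', a ≠ a' ∧ ∀ j, H j a = H j a'}
  have hsplitR : (good : ℝ) + bad = (card β : ℝ) ^ (card α * card ι) := by exact_mod_cast hsplit
  have hbadR : (bad : ℝ) * card β ^ card ι ≤ card α ^ 2 * card β ^ (card α * card ι) := by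
    exact_mod_cast hbad
  have hN : (0 : ℝ) < card β ^ (card α * card ι) := by positivity
  have hgood : (good : ℝ) / card β ^ (card α * card ι)
      = 1 - bad / card β ^ (card α * card ι) := by
    rw [eq_sub_iff_add_eq, ← add_div, hsplitR, div_self hN.ne']
  rw [hgood]
  exact sub_le_sub_left ((div_le_div_iff₀ hN (by positivity)).2 hbadR) 1

end Collisions

theorem sq_le_mul_pow_of_two_log_div_sqrt_le {x b δ : ℝ} {R : ℕ} (hx : 0 ≤ x) (hb : 1 < b)
    (hδ : 0 < δ) (h : 2 * Real.log (x / √δ) / Real.log b ≤ R) : x ^ 2 ≤ δ * b ^ R := by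
  rcases hx.eq_or_lt with rfl | hx
  · rw [zero_pow two_ne_zero]
    exact mul_nonneg hδ.le (pow_nonneg (by linarith) R)
  rw [div_le_iff₀ (Real.log_pos hb)] at h
  have hlog : Real.log ((x / √δ) ^ 2) ≤ Real.log (b ^ R) := by
    rw [Real.log_pow, Real.log_pow]
    push_cast
    linarith
  rw [Real.log_le_log_iff (by positivity) (by positivity), div_pow, Real.sq_sqrt hδ.le,
    div_le_iff₀ hδ] at hlog
  linarith

theorem mach_all_pairs_distinguishable_general
    (K B R : ℕ) (hB : 2 ≤ B)
    (δ : ℝ) (hδ0 : 0 < δ)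
    (hR : (R : ℝ) ≥ 2 * Real.log ((K : ℝ) / Real.sqrt δ) / Real.log B) :
    ((Finset.univ.filter
        (fun H : Fin R → (Fin K → Fin B) =>
          ∀ c₁ c₂ : Fin K, c₁ ≠ c₂ → ∃ j : Fin R, H j c₁ ≠ H j c₂)).card : ℝ)
        / (B : ℝ) ^ (K * R)
      ≥ 1 - δ := by
  have : NeZero B := ⟨by omega⟩
  have hKB : (K : ℝ) ^ 2 ≤ δ * (B : ℝ) ^ R :=
    sq_le_mul_pow_of_two_log_div_sqrt_le K.cast_nonneg (by exact_mod_cast hB) hδ0 hR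
  have hbound := one_sub_sq_div_pow_le_card_filter_distinguishing_div (ι := Fin R) (α := Fin K)
    (β := Fin B)
  simp only [Fintype.card_fin] at hbound
  calc 1 - δ ≤ 1 - (K : ℝ) ^ 2 / B ^ R :=
        sub_le_sub_left ((div_le_iff₀ (by positivity)).2 hKB) 1
    -- the two filters differ only in their `Decidable` instances
    _ ≤ _ := by convert hbound

/-- (Theorem 2) Let `B ≥ 2`, `K ≥ 1`, `0 < δ ≤ 1`, and let `R ≥ 1` satisfy
`R ≥ 2·log(K/√δ)/log B` (natural logarithms). If `H = (h_1, …, h_R)` consists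
of `R` independent uniformly random hash functions `Fin K → Fin B`, then with
probability at least `1 − δ` every pair of distinct classes `c₁ ≠ c₂` is
distinguishable under `H`, i.e. some `j` has `H j c₁ ≠ H j c₂`. -/
theorem mach_all_pairs_distinguishable
    (K B R : ℕ) (hK : 1 ≤ K) (hB : 2 ≤ B) (hRpos : 0 < R)
    (δ : ℝ) (hδ0 : 0 < δ) (hδ1 : δ ≤ 1)
    (hR : (R : ℝ) ≥ 2 * Real.log ((K : ℝ) / Real.sqrt δ) / Real.log B) :
    ((Finset.univ.filter
        (fun H : Fin R → (Fin K → Fin B) =>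
          ∀ c₁ c₂ : Fin K, c₁ ≠ c₂ → ∃ j : Fin R, H j c₁ ≠ H j c₂)).card : ℝ)
        / (B : ℝ) ^ (K * R)
      ≥ 1 - δ :=
  mach_all_pairs_distinguishable_general K B R hB δ hδ0 hR
end
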